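/- arXiv:0803.2611 — 2 statements merged into one kernel-verified Lean document; each statement's English description precedes it below -/
import Mathlib

section
/- Let g₃(n) = 2^{s₂(3n)} be the number of odd coefficients of (1+x+x^2+x^3)^n. Then lim_{n→∞} ln(Var(g₃(N)))/ln(n) = ln(5/2)/ln(2), where Var(g₃(N)) = (1/n)∑_{k=0}^{n−1} g₃(k)² − ((1/n)∑_{k=0}^{n−1} g₃(k))². -/
/-!
Write `S_r(x, n) = ∑_{k<n} x^{s₂(3k+r)}` for `r = 0, 1, 2`. Splitting `k` by parity expresses
`S_r(x, 2n)` linearly through the `S_r(x, n)`, with column sums `1 + x`; so on a dyadic block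
`k < 2^m` the three sums add up to `(1 + 2x)(1 + x)^m` and each is at least `(1 + x)^m`.
For `2^m ≤ n < 2^(m+1)` this gives `∑ g₃(k)² = S_0(4, n) ≍ 5^m` and `∑ g₃(k) = S_0(2, n) = O(3^m)`,
so the variance is `≍ (5/2)^m`, the squared mean being only `O((9/4)^m)`. Hence
`log Var = m log(5/2) + O(1)` while `log n = m log 2 + O(1)`.
-/

open Finset Filter Real Asymptotics Topology

namespace Nat

theorem digits_two_sum_two_mul (n : ℕ) : (digits 2 (2 * n)).sum = (digits 2 n).sum := by
  rcases n.eq_zero_or_pos with rfl | hn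
  · rfl
  · rw [digits_base_mul one_lt_two hn, List.sum_cons, zero_add]

theorem digits_two_sum_two_mul_add_one (n : ℕ) :
    (digits 2 (2 * n + 1)).sum = (digits 2 n).sum + 1 := by
  rw [add_comm, digits_add 2 one_lt_two 1 n one_lt_two (Or.inl one_ne_zero), List.sum_cons,
    add_comm]

end Nat

theorem Finset.sum_range_two_mul {M : Type*} [AddCommMonoid M] (f : ℕ → M) (n : ℕ) :
    ∑ k ∈ range (2 * n), f k = ∑ k ∈ range n, (f (2 * k) + f (2 * k + 1)) := by
  induction n with
  | zero => simp
  | succ n ih => rw [Nat.mul_succ, sum_range_succ, sum_range_succ, sum_range_succ, ih, add_assoc]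

section DigitPowSum

variable {R : Type*} [CommSemiring R]

def digitPowSum (x : R) (r n : ℕ) : R :=
  ∑ k ∈ range n, x ^ (Nat.digits 2 (3 * k + r)).sum

theorem digitPowSum_zero_two_mul (x : R) (n : ℕ) :
    digitPowSum x 0 (2 * n) = digitPowSum x 0 n + x * digitPowSum x 1 n := by
  simp only [digitPowSum, sum_range_two_mul, sum_add_distrib, mul_sum]
  congr 1 <;> refine sum_congr rfl fun k _ => ?_
  · rw [show 3 * (2 * k) + 0 = 2 * (3 * k + 0) by ring, Nat.digits_two_sum_two_mul]
  · rw [show 3 * (2 * k + 1) + 0 = 2 * (3 * k + 1) + 1 by ring,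
      Nat.digits_two_sum_two_mul_add_one, pow_succ', mul_comm]

theorem digitPowSum_one_two_mul (x : R) (n : ℕ) :
    digitPowSum x 1 (2 * n) = x * digitPowSum x 0 n + digitPowSum x 2 n := by
  simp only [digitPowSum, sum_range_two_mul, sum_add_distrib, mul_sum]
  congr 1 <;> refine sum_congr rfl fun k _ => ?_
  · rw [show 3 * (2 * k) + 1 = 2 * (3 * k + 0) + 1 by ring,
      Nat.digits_two_sum_two_mul_add_one, pow_succ', mul_comm]
  · rw [show 3 * (2 * k + 1) + 1 = 2 * (3 * k + 2) by ring, Nat.digits_two_sum_two_mul]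

theorem digitPowSum_two_two_mul (x : R) (n : ℕ) :
    digitPowSum x 2 (2 * n) = digitPowSum x 1 n + x * digitPowSum x 2 n := by
  simp only [digitPowSum, sum_range_two_mul, sum_add_distrib, mul_sum]
  congr 1 <;> refine sum_congr rfl fun k _ => ?_
  · rw [show 3 * (2 * k) + 2 = 2 * (3 * k + 1) by ring, Nat.digits_two_sum_two_mul]
  · rw [show 3 * (2 * k + 1) + 2 = 2 * (3 * k + 2) + 1 by ring,
      Nat.digits_two_sum_two_mul_add_one, pow_succ', mul_comm]

theorem digitPowSum_add_add_two_pow (x : R) (m : ℕ) :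
    digitPowSum x 0 (2 ^ m) + digitPowSum x 1 (2 ^ m) + digitPowSum x 2 (2 ^ m) =
      (1 + 2 * x) * (1 + x) ^ m := by
  induction m with
  | zero => norm_num [digitPowSum]; ring
  | succ m ih =>
    calc _ = (1 + x) * (digitPowSum x 0 (2 ^ m) + digitPowSum x 1 (2 ^ m)
          + digitPowSum x 2 (2 ^ m)) := by
          rw [pow_succ', digitPowSum_zero_two_mul, digitPowSum_one_two_mul,
            digitPowSum_two_two_mul]
          ring
      _ = _ := by rw [ih]; ring

variable [PartialOrder R] [IsOrderedRing R]

theorem digitPowSum_mono {x : R} (hx : 0 ≤ x) (r : ℕ) : Monotone (digitPowSum x r) :=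
  fun _ _ h => sum_le_sum_of_subset_of_nonneg (range_subset_range.2 h) fun _ _ _ => by positivity

theorem one_add_pow_le_digitPowSum {x : R} (hx : 1 ≤ x) (m : ℕ) {r : ℕ} (hr : r ≤ 2) :
    (1 + x) ^ m ≤ digitPowSum x r (2 ^ m) := by
  have hx0 : 0 ≤ x := zero_le_one.trans hx
  induction m generalizing r with
  | zero => simpa [digitPowSum] using one_le_pow₀ hx
  | succ m ih =>
    have h0 := ih (r := 0) (by norm_num)
    have h1 := ih (r := 1) (by norm_num)
    have h2 := ih (r := 2) le_rfl
    rw [pow_succ', one_add_mul, pow_succ']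
    interval_cases r
    · rw [digitPowSum_zero_two_mul]; gcongr
    · rw [digitPowSum_one_two_mul, add_comm]; gcongr
    · rw [digitPowSum_two_two_mul]; gcongr

theorem one_add_pow_log_le_digitPowSum {x : R} (hx : 1 ≤ x) {n : ℕ} (hn : n ≠ 0) :
    (1 + x) ^ Nat.log 2 n ≤ digitPowSum x 0 n :=
  (one_add_pow_le_digitPowSum hx _ (Nat.zero_le _)).trans
    (digitPowSum_mono (zero_le_one.trans hx) 0 (Nat.pow_log_le_self 2 hn))

theorem digitPowSum_le_pow_log {x : R} (hx : 0 ≤ x) (n : ℕ) :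
    digitPowSum x 0 n ≤ (1 + 2 * x) * (1 + x) ^ (Nat.log 2 n + 1) := by
  set N := 2 ^ (Nat.log 2 n + 1)
  have hBC : 0 ≤ digitPowSum x 1 N + digitPowSum x 2 N :=
    add_nonneg (sum_nonneg fun _ _ => by positivity) (sum_nonneg fun _ _ => by positivity)
  calc digitPowSum x 0 n ≤ digitPowSum x 0 N :=
        digitPowSum_mono hx 0 (Nat.lt_pow_succ_log_self one_lt_two n).le
    _ ≤ digitPowSum x 0 N + digitPowSum x 1 N + digitPowSum x 2 N := by
        rw [add_assoc]; exact le_add_of_nonneg_right hBC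
    _ = _ := digitPowSum_add_add_two_pow x _

end DigitPowSum

noncomputable def oddCoeffVariance (n : ℕ) : ℝ :=
  (1 / (n : ℝ)) * (∑ k ∈ range n, ((2 : ℝ) ^ (Nat.digits 2 (3 * k)).sum) ^ 2)
    - ((1 / (n : ℝ)) * ∑ k ∈ range n, (2 : ℝ) ^ (Nat.digits 2 (3 * k)).sum) ^ 2

theorem oddCoeffVariance_eq (n : ℕ) :
    oddCoeffVariance n = digitPowSum (4 : ℝ) 0 n / n - (digitPowSum (2 : ℝ) 0 n / n) ^ 2 := by
  have hsq (j : ℕ) : ((2 : ℝ) ^ j) ^ 2 = 4 ^ j := by rw [← pow_mul, mul_comm, pow_mul]; norm_num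
  simp only [oddCoeffVariance, digitPowSum, add_zero, hsq, one_div_mul_eq_div]

theorem oddCoeffVariance_bounds {n : ℕ} (hn : n ≠ 0) :
    (5 / 2) ^ Nat.log 2 n / 2 - 225 * (9 / 4) ^ Nat.log 2 n ≤ oddCoeffVariance n ∧
      oddCoeffVariance n ≤ 45 * (5 / 2) ^ Nat.log 2 n := by
  set m := Nat.log 2 n
  have hn_lo : (2 : ℝ) ^ m ≤ n := by exact_mod_cast Nat.pow_log_le_self 2 hn
  have hn_hi : (n : ℝ) ≤ 2 ^ m * 2 := by
    exact_mod_cast (Nat.lt_pow_succ_log_self one_lt_two n).le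
  have hS4_lo : (5 : ℝ) ^ m ≤ digitPowSum 4 0 n :=
    (one_add_pow_log_le_digitPowSum (x := (4 : ℝ)) (by norm_num) hn).trans_eq'
      (by rw [show (1 : ℝ) + 4 = 5 by norm_num])
  have hS4_hi : digitPowSum (4 : ℝ) 0 n ≤ 45 * 5 ^ m :=
    (digitPowSum_le_pow_log (x := (4 : ℝ)) (by norm_num) n).trans_eq (by ring)
  have hS2_hi : digitPowSum (2 : ℝ) 0 n ≤ 15 * 3 ^ m :=
    (digitPowSum_le_pow_log (x := (2 : ℝ)) (by norm_num) n).trans_eq (by ring)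
  have hS2_nonneg : 0 ≤ digitPowSum (2 : ℝ) 0 n := sum_nonneg fun _ _ => by positivity
  have hmean_sq : (digitPowSum (2 : ℝ) 0 n / n) ^ 2 ≤ 225 * (9 / 4) ^ m := by
    have hmean : digitPowSum (2 : ℝ) 0 n / n ≤ 15 * (3 / 2) ^ m := by
      rw [div_pow, ← mul_div_assoc]
      exact div_le_div₀ (by positivity) hS2_hi (by positivity) hn_lo
    calc _ ≤ (15 * (3 / 2) ^ m : ℝ) ^ 2 := by gcongr
      _ = 225 * (9 / 4) ^ m := by rw [mul_pow, ← pow_mul, mul_comm m, pow_mul]; norm_num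
  have hS4_mean_lo : (5 / 2 : ℝ) ^ m / 2 ≤ digitPowSum (4 : ℝ) 0 n / n := by
    rw [div_pow, div_div]
    exact div_le_div₀ ((pow_nonneg (by norm_num) m).trans hS4_lo) hS4_lo
      (Nat.cast_pos.2 (Nat.pos_of_ne_zero hn)) hn_hi
  have hS4_mean_hi : digitPowSum (4 : ℝ) 0 n / n ≤ 45 * (5 / 2) ^ m := by
    rw [div_pow, ← mul_div_assoc]
    exact div_le_div₀ (by positivity) hS4_hi (by positivity) hn_lo
  rw [oddCoeffVariance_eq]
  exact ⟨by linarith, by nlinarith [sq_nonneg (digitPowSum (2 : ℝ) 0 n / n)]⟩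

theorem eventually_oddCoeffVariance_bounds :
    ∀ᶠ n in atTop, 1 / 4 * (5 / 2) ^ Nat.log 2 n ≤ oddCoeffVariance n ∧
      oddCoeffVariance n ≤ 45 * (5 / 2) ^ Nat.log 2 n := by
  have hlog : Tendsto (Nat.log 2) atTop atTop :=
    tendsto_atTop_atTop.2 fun M => ⟨2 ^ M, fun n hn => Nat.le_log_of_pow_le one_lt_two hn⟩
  have hsmall : ∀ᶠ n in atTop, (9 / 10 : ℝ) ^ Nat.log 2 n ≤ 1 / 900 :=
    hlog.eventually ((tendsto_pow_atTop_nhds_zero_of_lt_one (by norm_num) (by norm_num)).eventually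
      (ge_mem_nhds (by norm_num)))
  filter_upwards [hsmall, eventually_ne_atTop 0] with n hn_small hn
  obtain ⟨hlo, hhi⟩ := oddCoeffVariance_bounds hn
  refine ⟨le_trans ?_ hlo, hhi⟩
  have : (9 / 4 : ℝ) ^ Nat.log 2 n = (9 / 10) ^ Nat.log 2 n * (5 / 2) ^ Nat.log 2 n := by
    rw [← mul_pow]; norm_num
  rw [this]
  nlinarith [pow_pos (by norm_num : (0 : ℝ) < 5 / 2) (Nat.log 2 n)]

theorem tendsto_div_log_of_isBigO {g : ℕ → ℝ} {γ : ℝ}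
    (h : (fun n => g n - γ * log n) =O[atTop] fun _ => (1 : ℝ)) :
    Tendsto (fun n => g n / log n) atTop (𝓝 γ) := by
  have hlog : Tendsto (fun n : ℕ => log n) atTop atTop :=
    tendsto_log_atTop.comp tendsto_natCast_atTop_atTop
  have hlim := ((h.trans_isLittleO ((isLittleO_one_left_iff ℝ).2
    (tendsto_norm_atTop_atTop.comp hlog))).tendsto_div_nhds_zero).add_const γ
  rw [zero_add] at hlim
  refine hlim.congr' ?_
  filter_upwards [hlog.eventually_gt_atTop 0] with n hn
  field_simp
  ring

theorem tendsto_log_div_log_of_pow_log_bounds {f : ℕ → ℝ} {c C r : ℝ} (hc : 0 < c) (hr : 0 < r)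
    (h : ∀ᶠ n in atTop, c * r ^ Nat.log 2 n ≤ f n ∧ f n ≤ C * r ^ Nat.log 2 n) :
    Tendsto (fun n => log (f n) / log n) atTop (𝓝 (logb 2 r)) := by
  apply tendsto_div_log_of_isBigO
  have hf : (fun n => log (f n) - Nat.log 2 n * log r) =O[atTop] fun _ => (1 : ℝ) := by
    refine IsBigO.of_bound (|log c| + |log C|) ?_
    filter_upwards [h] with n ⟨hlo, hhi⟩
    have hpos : 0 < c * r ^ Nat.log 2 n := by positivity
    have h1 := log_le_log hpos hlo
    have h2 := log_le_log (hpos.trans_le hlo) hhi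
    rw [log_mul hc.ne' (by positivity), log_pow] at h1
    rw [log_mul (left_ne_zero_of_mul (hpos.trans_le (hlo.trans hhi)).ne') (by positivity),
      log_pow] at h2
    rw [norm_one, mul_one, norm_eq_abs, abs_le]
    constructor <;> linarith [neg_abs_le (log c), le_abs_self (log C), abs_nonneg (log c),
      abs_nonneg (log C)]
  have hlog : (fun n : ℕ => (Nat.log 2 n : ℝ) * log 2 - log n) =O[atTop] fun _ => (1 : ℝ) := by
    refine IsBigO.of_bound (log 2) ?_
    filter_upwards [eventually_ne_atTop 0] with n hn
    have hlo : (2 : ℝ) ^ Nat.log 2 n ≤ n := by exact_mod_cast Nat.pow_log_le_self 2 hn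
    have hhi : (n : ℝ) ≤ 2 ^ (Nat.log 2 n + 1) := by
      exact_mod_cast (Nat.lt_pow_succ_log_self one_lt_two n).le
    have h1 := log_le_log (by positivity) hlo
    have h2 := log_le_log (by positivity) hhi
    rw [log_pow] at h1 h2
    push_cast at h2
    rw [norm_one, mul_one, norm_eq_abs, abs_le]
    constructor <;> linarith
  refine (hf.add (hlog.const_mul_left (logb 2 r))).congr_left fun n => ?_
  rw [logb]
  field_simp
  ring

/-- With `g₃ k = 2^{s₂(3k)}` the number of odd coefficients of `(1+x+x²+x³)^k`,
and `Var(g₃(N)) = (1/n)∑_{k<n} g₃(k)² − ((1/n)∑_{k<n} g₃(k))²` the variance under the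
uniform distribution on `{0,…,n−1}`, we have `ln(Var(g₃(N)))/ln n → ln(5/2)/ln 2`. -/
theorem quadrinomial_average_dispersion :
    Filter.Tendsto
      (fun n : ℕ =>
        Real.log
            ((1 / (n : ℝ)) *
                (∑ k ∈ Finset.range n, ((2 : ℝ) ^ (Nat.digits 2 (3 * k)).sum) ^ 2)
              - ((1 / (n : ℝ)) *
                  ∑ k ∈ Finset.range n, (2 : ℝ) ^ (Nat.digits 2 (3 * k)).sum) ^ 2)
          / Real.log n)
      Filter.atTop (nhds (Real.log (5 / 2) / Real.log 2)) := by
  show Tendsto (fun n => log (oddCoeffVariance n) / log n) atTop (𝓝 (logb 2 (5 / 2)))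
  exact tendsto_log_div_log_of_pow_log_bounds (by norm_num : (0 : ℝ) < 1 / 4) (by norm_num)
    eventually_oddCoeffVariance_bounds
end

section
/- For every integer q ≥ 1, the series ∑_{n≥0} a_{q,n}·(n+q)(n+q−1)·2^{−(n+q)} converges and equals 4(2^{2q+1} − (3+q)·2^q + 1). (This is the value F_{ss}(1,0) of the second derivative in s of F(s,0) = ∑_{w∈χ(0^q)} (s/2)^{ℓ(w)+q} at s = 1.) -/
/-!
A nonempty word of `χ(0^q)` splits uniquely as `0^k 1 v` with `k < q` and `v ∈ χ(0^q)`.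
Hence `u n = a_{q,n} / 2^n` is the renewal sequence `u = δ₀ + p * u` of the weights
`p m = 2^{-m}` on `{1, …, q}`, whose total mass `1 - 2^{-q}` is below one. Multiplying a
sequence by `n` is a derivation of the Cauchy product, so the moments `S r = ∑ n^r u n` satisfy
`S 0 = 1 + P 0 * S 0`, `S 1 = P 1 * S 0 + P 0 * S 1` and
`S 2 = P 2 * S 0 + 2 * P 1 * S 1 + P 0 * S 2`, where `P r = ∑ m^r p m`; they converge because
`u n ≤ t^{-n}` for any `t > 1` with `∑ p m t^m ≤ 1`. The series is
`2^{-q} (S 2 + (2q - 1) S 1 + q (q - 1) S 0)`.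
-/

/-- A binary word (`false` = 0, `true` = 1) lies in `χ(0^q)` iff it contains no block of `q`
consecutive 0s and its rightmost digit is 1 (the empty word is allowed). -/
def goodWord (q : ℕ) (w : List Bool) : Prop :=
  ¬ (List.replicate q false <:+: w) ∧ ∀ h : w ≠ [], w.getLast h = true

/-- `a q n` is the number of words of length `n` in `χ(0^q)`. -/
noncomputable def wordCount (q n : ℕ) : ℕ :=
  Nat.card {w : Fin n → Bool // goodWord q (List.ofFn w)}

namespace List

theorem replicate_false_prefix_replicate_false_append_true_cons {q k : ℕ} {v : List Bool} :
    replicate q false <+: replicate k false ++ true :: v ↔ q ≤ k := by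
  induction q generalizing k with
  | zero => simp
  | succ q ih => cases k <;> simp [replicate_succ, ih]

theorem replicate_false_infix_replicate_false_append_true_cons {q k : ℕ} {v : List Bool} :
    replicate q false <:+: replicate k false ++ true :: v ↔ q ≤ k ∨ replicate q false <:+: v := by
  induction k with
  | zero =>
    have := replicate_false_prefix_replicate_false_append_true_cons (q := q) (k := 0) (v := v)
    rw [replicate_zero, nil_append] at this ⊢
    rw [infix_cons_iff, this]
  | succ k ih =>
    have := replicate_false_prefix_replicate_false_append_true_cons (q := q) (k := k + 1) (v := v)
    rw [replicate_succ, cons_append] at this ⊢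
    rw [infix_cons_iff, this, ih, ← or_assoc, or_iff_left_of_imp (b := q ≤ k) (by omega)]

theorem exists_eq_replicate_false_append_true_cons {l : List Bool} (h : true ∈ l) :
    ∃ k v, l = replicate k false ++ true :: v := by
  induction l with
  | nil => simp at h
  | cons b l ih =>
    cases b
    · obtain ⟨k, v, rfl⟩ := ih (by simpa using h)
      exact ⟨k + 1, v, rfl⟩
    · exact ⟨0, l, rfl⟩

theorem replicate_false_append_true_cons_inj {k k' : ℕ} {v v' : List Bool}
    (h : replicate k false ++ true :: v = replicate k' false ++ true :: v') : k = k' ∧ v = v' := by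
  induction k generalizing k' with
  | zero => cases k' <;> simp_all [replicate_succ]
  | succ k ih =>
    cases k' with
    | zero => simp [replicate_succ] at h
    | succ k' => simpa [replicate_succ] using ih (by simpa [replicate_succ] using h)

end List

open Finset

theorem goodWord_nil {q : ℕ} : goodWord q [] ↔ 0 < q := by
  simp [goodWord, Nat.pos_iff_ne_zero]

theorem goodWord_replicate_false_append_true_cons {q k : ℕ} {v : List Bool} :
    goodWord q (List.replicate k false ++ true :: v) ↔ k < q ∧ goodWord q v := by
  have hlast : (∀ h : List.replicate k false ++ true :: v ≠ [],
      (List.replicate k false ++ true :: v).getLast h = true) ↔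
      ∀ h : v ≠ [], v.getLast h = true := by
    rcases eq_or_ne v [] with rfl | hv
    · simp
    · simp [List.getLast_append_of_ne_nil _ (List.cons_ne_nil true v), List.getLast_cons hv, hv]
  rw [goodWord, goodWord, List.replicate_false_infix_replicate_false_append_true_cons, hlast,
    not_or, not_le, and_assoc]

theorem goodWord_and_ne_nil_iff {q : ℕ} {l : List Bool} :
    goodWord q l ∧ l ≠ [] ↔
      ∃ k v, k < q ∧ goodWord q v ∧ l = List.replicate k false ++ true :: v := by
  constructor
  · rintro ⟨hl, hne⟩
    obtain ⟨k, v, rfl⟩ :=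
      List.exists_eq_replicate_false_append_true_cons (hl.2 hne ▸ List.getLast_mem hne)
    obtain ⟨hk, hv⟩ := goodWord_replicate_false_append_true_cons.1 hl
    exact ⟨k, v, hk, hv, rfl⟩
  · rintro ⟨k, v, hk, hv, rfl⟩
    exact ⟨goodWord_replicate_false_append_true_cons.2 ⟨hk, hv⟩, by simp⟩

open scoped Classical in
noncomputable def goodWords (q n : ℕ) : Finset (List Bool) :=
  {l ∈ (univ : Finset (Fin n → Bool)).image List.ofFn | goodWord q l}

theorem mem_goodWords {q n : ℕ} {l : List Bool} :
    l ∈ goodWords q n ↔ l.length = n ∧ goodWord q l := by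
  classical
  rw [goodWords, mem_filter, mem_image]
  constructor
  · rintro ⟨⟨w, -, rfl⟩, h⟩
    exact ⟨List.length_ofFn, h⟩
  · rintro ⟨rfl, h⟩
    exact ⟨⟨fun i => l[(i : ℕ)], mem_univ _, List.ofFn_getElem⟩, h⟩

theorem wordCount_eq_card_goodWords (q n : ℕ) : wordCount q n = #(goodWords q n) := by
  classical
  rw [wordCount, Nat.card_eq_fintype_card, Fintype.card_subtype, goodWords, filter_image,
    card_image_of_injective _ List.ofFn_injective]

theorem wordCount_zero {q : ℕ} (hq : 0 < q) : wordCount q 0 = 1 := by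
  have : goodWords q 0 = {[]} := by
    ext l
    rw [mem_goodWords, Finset.mem_singleton, List.length_eq_zero_iff]
    exact ⟨And.left, by rintro rfl; exact ⟨rfl, goodWord_nil.2 hq⟩⟩
  rw [wordCount_eq_card_goodWords, this, card_singleton]

theorem goodWords_succ (q n : ℕ) :
    goodWords q (n + 1) = {x ∈ antidiagonal n | x.1 < q}.biUnion
      fun x => (goodWords q x.2).image (List.replicate x.1 false ++ true :: ·) := by
  ext l
  simp only [mem_biUnion, mem_filter, HasAntidiagonal.mem_antidiagonal, mem_image, mem_goodWords]
  constructor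
  · rintro ⟨hlen, hl⟩
    obtain ⟨k, v, hk, hv, rfl⟩ :=
      goodWord_and_ne_nil_iff.1 ⟨hl, List.ne_nil_of_length_eq_add_one hlen⟩
    refine ⟨(k, v.length), ⟨?_, hk⟩, v, ⟨rfl, hv⟩, rfl⟩
    simp only [List.length_append, List.length_replicate, List.length_cons] at hlen
    omega
  · rintro ⟨⟨k, m⟩, ⟨hkm, hk⟩, v, ⟨rfl, hv⟩, rfl⟩
    refine ⟨?_, goodWord_replicate_false_append_true_cons.2 ⟨hk, hv⟩⟩
    simp only [List.length_append, List.length_replicate, List.length_cons] at hkm ⊢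
    omega

theorem wordCount_succ (q n : ℕ) :
    wordCount q (n + 1) = ∑ x ∈ antidiagonal n with x.1 < q, wordCount q x.2 := by
  simp only [wordCount_eq_card_goodWords, goodWords_succ]
  rw [card_biUnion]
  · refine sum_congr rfl fun x _ => card_image_of_injective _ fun v w h => ?_
    simpa using h
  · intro x hx y hy hxy
    refine disjoint_left.2 fun l hlx hly => hxy ?_
    simp only [coe_filter, Set.mem_ofPred_eq, HasAntidiagonal.mem_antidiagonal, mem_image]
      at hx hy hlx hly
    obtain ⟨v, -, rfl⟩ := hlx
    obtain ⟨w, -, hw⟩ := hly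
    obtain ⟨hk, -⟩ := List.replicate_false_append_true_cons_inj hw
    ext <;> omega

open Filter Topology

def cauchyProduct (f g : ℕ → ℝ) (n : ℕ) : ℝ := ∑ x ∈ antidiagonal n, f x.1 * g x.2

-- On generating functions `weighted` is `x d/dx`.
def weighted (f : ℕ → ℝ) (n : ℕ) : ℝ := n * f n

section CauchyProduct

variable {f g : ℕ → ℝ}

theorem weighted_add (f g : ℕ → ℝ) : weighted (f + g) = weighted f + weighted g := by
  ext n
  simp only [weighted, Pi.add_apply, mul_add]

theorem weighted_iterate_apply (r : ℕ) (f : ℕ → ℝ) (n : ℕ) :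
    weighted^[r] f n = (n : ℝ) ^ r * f n := by
  induction r generalizing f with
  | zero => simp
  | succ r ih => rw [Function.iterate_succ_apply, ih, weighted, pow_succ, mul_assoc]

theorem weighted_cauchyProduct (f g : ℕ → ℝ) :
    weighted (cauchyProduct f g) = cauchyProduct (weighted f) g + cauchyProduct f (weighted g) := by
  ext n
  simp only [weighted, cauchyProduct, Pi.add_apply, mul_sum, ← sum_add_distrib]
  refine sum_congr rfl fun x hx => ?_
  rw [← HasAntidiagonal.mem_antidiagonal.1 hx]
  push_cast
  ring

theorem hasSum_cauchyProduct (hf : Summable (‖f ·‖)) (hg : Summable (‖g ·‖)) :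
    HasSum (cauchyProduct f g) ((∑' n, f n) * ∑' n, g n) := by
  rw [tsum_mul_tsum_eq_tsum_sum_antidiagonal_of_summable_norm hf hg]
  exact (summable_norm_sum_mul_antidiagonal_of_summable_norm hf hg).of_norm.hasSum

theorem hasSum_weighted_cauchyProduct (hf : Summable (‖f ·‖)) (hf₁ : Summable (‖weighted f ·‖))
    (hg : Summable (‖g ·‖)) (hg₁ : Summable (‖weighted g ·‖)) :
    HasSum (weighted (cauchyProduct f g))
      ((∑' n, weighted f n) * (∑' n, g n) + (∑' n, f n) * ∑' n, weighted g n) := by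
  rw [weighted_cauchyProduct]
  exact (hasSum_cauchyProduct hf₁ hg).add (hasSum_cauchyProduct hf hg₁)

theorem hasSum_weighted_weighted_cauchyProduct (hf : Summable (‖f ·‖))
    (hf₁ : Summable (‖weighted f ·‖)) (hf₂ : Summable (‖weighted (weighted f) ·‖))
    (hg : Summable (‖g ·‖)) (hg₁ : Summable (‖weighted g ·‖))
    (hg₂ : Summable (‖weighted (weighted g) ·‖)) :
    HasSum (weighted (weighted (cauchyProduct f g)))
      ((∑' n, weighted (weighted f) n) * (∑' n, g n)
        + 2 * ((∑' n, weighted f n) * ∑' n, weighted g n)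
        + (∑' n, f n) * ∑' n, weighted (weighted g) n) := by
  rw [weighted_cauchyProduct, weighted_add, weighted_cauchyProduct, weighted_cauchyProduct]
  convert ((hasSum_cauchyProduct hf₂ hg).add (hasSum_cauchyProduct hf₁ hg₁)).add
    ((hasSum_cauchyProduct hf₁ hg₁).add (hasSum_cauchyProduct hf hg₂)) using 1
  · ext n
    simp only [Pi.add_apply]
  · ring

theorem weighted_apply_eq_zero {n : ℕ} (h : f n = 0) : weighted f n = 0 := by
  rw [weighted, h, mul_zero]

theorem summable_norm_of_finset {s : Finset ℕ} (hs : ∀ i ∉ s, f i = 0) : Summable (‖f ·‖) :=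
  summable_of_ne_finset_zero (s := s) fun i hi => by rw [hs i hi, norm_zero]

end CauchyProduct

theorem exists_one_lt_sum_mul_pow_lt_one {s : Finset ℕ} {p : ℕ → ℝ} (h : ∑ i ∈ s, p i < 1) :
    ∃ t, 1 < t ∧ ∑ i ∈ s, p i * t ^ i < 1 := by
  have hc : Continuous fun t : ℝ => ∑ i ∈ s, p i * t ^ i := by fun_prop
  have h1 : ∀ᶠ t in 𝓝 (1 : ℝ), ∑ i ∈ s, p i * t ^ i < 1 :=
    hc.continuousAt.eventually_lt continuousAt_const (by simpa using h)
  obtain ⟨t, ht, ht1⟩ :=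
    ((h1.filter_mono nhdsWithin_le_nhds).and (eventually_mem_nhdsWithin (s := Set.Ioi 1))).exists
  exact ⟨t, ht1, ht⟩

def IsRenewalSequence (p u : ℕ → ℝ) : Prop :=
  ∀ n, u n = (if n = 0 then 1 else 0) + cauchyProduct p u n

section Renewal

variable {p u : ℕ → ℝ} {s : Finset ℕ}

theorem isRenewalSequence_iff (hp0 : p 0 = 0) :
    IsRenewalSequence p u ↔
      u 0 = 1 ∧ ∀ n, u (n + 1) = ∑ x ∈ antidiagonal n, p (x.1 + 1) * u x.2 := by
  have h0 : cauchyProduct p u 0 = 0 := by simp [cauchyProduct, hp0]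
  have hsucc (n : ℕ) : cauchyProduct p u (n + 1) = ∑ x ∈ antidiagonal n, p (x.1 + 1) * u x.2 := by
    simp [cauchyProduct, Nat.sum_antidiagonal_succ, hp0]
  constructor
  · intro hu
    exact ⟨by simpa [h0] using hu 0, fun n => by simpa [hsucc] using hu (n + 1)⟩
  · rintro ⟨hu0, hu⟩ (_ | n)
    · simp [h0, hu0]
    · simp [hsucc, hu]

namespace IsRenewalSequence

variable (hu : IsRenewalSequence p u)
include hu

theorem nonneg (hp0 : p 0 = 0) (hp : 0 ≤ p) (n : ℕ) : 0 ≤ u n := by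
  obtain ⟨hu0, hu⟩ := (isRenewalSequence_iff hp0).1 hu
  induction n using Nat.strong_induction_on with
  | _ n ih =>
    rcases n with _ | n
    · simp [hu0]
    · rw [hu]
      refine sum_nonneg fun x hx => mul_nonneg (hp _) (ih _ ?_)
      have := HasAntidiagonal.mem_antidiagonal.1 hx
      omega

theorem mul_pow_le_one (hp0 : p 0 = 0) (hp : 0 ≤ p) (hs : ∀ i ∉ s, p i = 0) {t : ℝ} (ht : 0 ≤ t)
    (hpt : ∑ i ∈ s, p i * t ^ i ≤ 1) (n : ℕ) : u n * t ^ n ≤ 1 := by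
  obtain ⟨hu0, hu'⟩ := (isRenewalSequence_iff hp0).1 hu
  set F : ℕ → ℝ := fun i => p i * t ^ i
  have hF : 0 ≤ F := fun i => mul_nonneg (hp i) (pow_nonneg ht i)
  have hFsum : ∑' i, F i ≤ 1 := by
    rwa [tsum_eq_sum fun i hi => by simp [F, hs i hi]]
  have hFs : Summable F := summable_of_ne_finset_zero (s := s) fun i hi => by simp [F, hs i hi]
  induction n using Nat.strong_induction_on with
  | _ n ih =>
    rcases n with _ | n
    · simp [hu0]
    calc u (n + 1) * t ^ (n + 1)
        = ∑ x ∈ antidiagonal n, F (x.1 + 1) * (u x.2 * t ^ x.2) := by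
          rw [hu', sum_mul]
          refine sum_congr rfl fun x hx => ?_
          rw [← HasAntidiagonal.mem_antidiagonal.1 hx]
          simp only [F]
          ring
      _ ≤ ∑ x ∈ antidiagonal n, F (x.1 + 1) := by
          refine sum_le_sum fun x hx => mul_le_of_le_one_right (hF _) (ih _ ?_)
          have := HasAntidiagonal.mem_antidiagonal.1 hx
          omega
      _ = ∑ i ∈ range (n + 2), F i - F 0 := by
          rw [Nat.sum_antidiagonal_eq_sum_range_succ_mk, sum_range_succ' _ (n + 1)]
          ring
      _ ≤ ∑' i, F i := (sub_le_self _ (hF 0)).trans (hFs.sum_le_tsum _ fun i _ => hF i)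
      _ ≤ 1 := hFsum

theorem summable_norm_weighted_iterate (hp0 : p 0 = 0) (hp : 0 ≤ p) (hs : ∀ i ∉ s, p i = 0)
    (hP : ∑ i ∈ s, p i < 1) (r : ℕ) : Summable fun n => ‖weighted^[r] u n‖ := by
  obtain ⟨t, ht, hpt⟩ := exists_one_lt_sum_mul_pow_lt_one hP
  have ht0 : 0 < t := zero_lt_one.trans ht
  refine .of_nonneg_of_le (fun n => norm_nonneg _) (fun n => ?_)
    (summable_pow_mul_geometric_of_norm_lt_one r (r := t⁻¹) ?_)
  · rw [weighted_iterate_apply, norm_mul, norm_pow, Real.norm_natCast,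
      Real.norm_of_nonneg (hu.nonneg hp0 hp n), inv_pow, ← one_div]
    gcongr
    exact (le_div_iff₀ (pow_pos ht0 n)).2 (hu.mul_pow_le_one hp0 hp hs ht0.le hpt.le n)
  · rw [norm_inv, Real.norm_of_nonneg ht0.le]
    exact inv_lt_one_of_one_lt₀ ht

theorem weighted_eq : weighted u = weighted (cauchyProduct p u) := by
  ext n
  rw [weighted, weighted, hu n]
  split_ifs with h <;> simp [h]

section Moments

variable (hp0 : p 0 = 0) (hp : 0 ≤ p) (hs : ∀ i ∉ s, p i = 0) (hP : ∑ i ∈ s, p i < 1)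
include hp0 hp hs hP

theorem hasSum : HasSum u (1 - ∑ i ∈ s, p i)⁻¹ := by
  have hS : Summable (‖u ·‖) := hu.summable_norm_weighted_iterate hp0 hp hs hP 0
  have h : HasSum u (1 + (∑ i ∈ s, p i) * ∑' n, u n) := by
    have h := (hasSum_ite_eq 0 (1 : ℝ)).add (hasSum_cauchyProduct (summable_norm_of_finset hs) hS)
    rwa [← funext hu, tsum_eq_sum hs] at h
  have e := hS.of_norm.hasSum.unique h
  rw [← eq_inv_of_mul_eq_one_left (a := ∑' n, u n) (by linear_combination e)]
  exact hS.of_norm.hasSum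

theorem hasSum_weighted :
    HasSum (weighted u) ((∑ i ∈ s, weighted p i) / (1 - ∑ i ∈ s, p i) ^ 2) := by
  have hs₁ (i) (hi : i ∉ s) : weighted p i = 0 := weighted_apply_eq_zero (hs i hi)
  have hS₀ : Summable (‖u ·‖) := hu.summable_norm_weighted_iterate hp0 hp hs hP 0
  have hS₁ : Summable (‖weighted u ·‖) := hu.summable_norm_weighted_iterate hp0 hp hs hP 1
  have h := hasSum_weighted_cauchyProduct (summable_norm_of_finset hs)
    (summable_norm_of_finset hs₁) hS₀ hS₁
  rw [← hu.weighted_eq, tsum_eq_sum hs, tsum_eq_sum hs₁, (hu.hasSum hp0 hp hs hP).tsum_eq] at h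
  have e := hS₁.of_norm.hasSum.unique h
  have hP' : 1 - ∑ i ∈ s, p i ≠ 0 := by linarith
  have hval : ∑' n, weighted u n = (∑ i ∈ s, weighted p i) / (1 - ∑ i ∈ s, p i) ^ 2 := by
    field_simp at e ⊢
    linear_combination e
  exact hval ▸ hS₁.of_norm.hasSum

theorem hasSum_weighted_weighted :
    HasSum (weighted (weighted u)) ((∑ i ∈ s, weighted (weighted p) i) / (1 - ∑ i ∈ s, p i) ^ 2
      + 2 * (∑ i ∈ s, weighted p i) ^ 2 / (1 - ∑ i ∈ s, p i) ^ 3) := by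
  have hs₁ (i) (hi : i ∉ s) : weighted p i = 0 := weighted_apply_eq_zero (hs i hi)
  have hs₂ (i) (hi : i ∉ s) : weighted (weighted p) i = 0 := weighted_apply_eq_zero (hs₁ i hi)
  have hS₀ : Summable (‖u ·‖) := hu.summable_norm_weighted_iterate hp0 hp hs hP 0
  have hS₁ : Summable (‖weighted u ·‖) := hu.summable_norm_weighted_iterate hp0 hp hs hP 1
  have hS₂ : Summable (‖weighted (weighted u) ·‖) :=
    hu.summable_norm_weighted_iterate hp0 hp hs hP 2
  have h := hasSum_weighted_weighted_cauchyProduct (summable_norm_of_finset hs)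
    (summable_norm_of_finset hs₁) (summable_norm_of_finset hs₂) hS₀ hS₁ hS₂
  rw [← hu.weighted_eq, tsum_eq_sum hs, tsum_eq_sum hs₁, tsum_eq_sum hs₂,
    (hu.hasSum hp0 hp hs hP).tsum_eq, (hu.hasSum_weighted hp0 hp hs hP).tsum_eq] at h
  have e := hS₂.of_norm.hasSum.unique h
  have hP' : 1 - ∑ i ∈ s, p i ≠ 0 := by linarith
  have hval : ∑' n, weighted (weighted u) n = (∑ i ∈ s, weighted (weighted p) i) /
      (1 - ∑ i ∈ s, p i) ^ 2 + 2 * (∑ i ∈ s, weighted p i) ^ 2 / (1 - ∑ i ∈ s, p i) ^ 3 := by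
    field_simp at e ⊢
    linear_combination e
  exact hval ▸ hS₂.of_norm.hasSum

end Moments

end IsRenewalSequence

end Renewal

theorem sum_Icc_inv_two_pow (q : ℕ) : ∑ i ∈ Icc 1 q, ((2 : ℝ) ^ i)⁻¹ = 1 - (2 ^ q)⁻¹ := by
  induction q with
  | zero => simp
  | succ q ih =>
    rw [sum_Icc_succ_top (by omega), ih, pow_succ]
    ring

theorem sum_Icc_mul_inv_two_pow (q : ℕ) :
    ∑ i ∈ Icc 1 q, (i : ℝ) * (2 ^ i)⁻¹ = 2 - (q + 2) * (2 ^ q)⁻¹ := by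
  induction q with
  | zero => norm_num
  | succ q ih =>
    rw [sum_Icc_succ_top (by omega), ih, pow_succ]
    push_cast
    ring

theorem sum_Icc_sq_mul_inv_two_pow (q : ℕ) :
    ∑ i ∈ Icc 1 q, (i : ℝ) ^ 2 * (2 ^ i)⁻¹ = 6 - ((q : ℝ) ^ 2 + 4 * q + 6) * (2 ^ q)⁻¹ := by
  induction q with
  | zero => norm_num
  | succ q ih =>
    rw [sum_Icc_succ_top (by omega), ih, pow_succ]
    push_cast
    ring

noncomputable def blockWeight (q m : ℕ) : ℝ := if m ∈ Icc 1 q then (2 ^ m)⁻¹ else 0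

section BlockWeight

variable {q : ℕ}

theorem blockWeight_zero : blockWeight q 0 = 0 := by simp [blockWeight]

theorem blockWeight_nonneg : 0 ≤ blockWeight q := fun m => by unfold blockWeight; positivity

theorem blockWeight_of_notMem {m : ℕ} (hm : m ∉ Icc 1 q) : blockWeight q m = 0 := if_neg hm

theorem sum_blockWeight : ∑ i ∈ Icc 1 q, blockWeight q i = 1 - (2 ^ q)⁻¹ := by
  rw [← sum_Icc_inv_two_pow]
  exact sum_congr rfl fun i hi => if_pos hi

theorem sum_blockWeight_lt_one : ∑ i ∈ Icc 1 q, blockWeight q i < 1 := by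
  rw [sum_blockWeight]
  simp

theorem sum_weighted_blockWeight :
    ∑ i ∈ Icc 1 q, weighted (blockWeight q) i = 2 - (q + 2) * (2 ^ q)⁻¹ := by
  rw [← sum_Icc_mul_inv_two_pow]
  exact sum_congr rfl fun i hi => by rw [weighted, blockWeight, if_pos hi]

theorem sum_weighted_weighted_blockWeight :
    ∑ i ∈ Icc 1 q, weighted (weighted (blockWeight q)) i =
      6 - ((q : ℝ) ^ 2 + 4 * q + 6) * (2 ^ q)⁻¹ := by
  rw [← sum_Icc_sq_mul_inv_two_pow]
  exact sum_congr rfl fun i hi => by rw [weighted, weighted, blockWeight, if_pos hi, sq, mul_assoc]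

theorem isRenewalSequence_wordCount (hq : 0 < q) :
    IsRenewalSequence (blockWeight q) fun n => (wordCount q n : ℝ) / 2 ^ n := by
  rw [isRenewalSequence_iff blockWeight_zero]
  refine ⟨by simp [wordCount_zero hq], fun n => ?_⟩
  rw [wordCount_succ, Nat.cast_sum, sum_filter, sum_div]
  refine sum_congr rfl fun x hx => ?_
  rw [← HasAntidiagonal.mem_antidiagonal.1 hx, blockWeight]
  by_cases hk : x.1 < q
  · rw [if_pos hk, if_pos (by simp; omega)]
    field_simp
    ring
  · rw [if_neg hk, if_neg (by simp; omega)]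
    simp

end BlockWeight

section WordCountMoments

variable {q : ℕ} (hq : 0 < q)
include hq

theorem hasSum_wordCount_div_two_pow : HasSum (fun n => (wordCount q n : ℝ) / 2 ^ n) (2 ^ q) := by
  have h := (isRenewalSequence_wordCount hq).hasSum blockWeight_zero blockWeight_nonneg
    (fun _ => blockWeight_of_notMem) sum_blockWeight_lt_one
  rwa [sum_blockWeight, sub_sub_cancel, inv_inv] at h

theorem hasSum_mul_wordCount_div_two_pow :
    HasSum (fun n : ℕ => n * (wordCount q n : ℝ) / 2 ^ n) (2 * (2 ^ q) ^ 2 - (q + 2) * 2 ^ q) := by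
  have h := (isRenewalSequence_wordCount hq).hasSum_weighted blockWeight_zero blockWeight_nonneg
    (fun _ => blockWeight_of_notMem) sum_blockWeight_lt_one
  rw [sum_weighted_blockWeight, sum_blockWeight, sub_sub_cancel] at h
  convert h using 1
  · exact funext fun n => mul_div_assoc _ _ _
  · field_simp

theorem hasSum_sq_mul_wordCount_div_two_pow :
    HasSum (fun n : ℕ => (n : ℝ) ^ 2 * wordCount q n / 2 ^ n)
      (8 * (2 ^ q) ^ 3 - (8 * q + 10) * (2 ^ q) ^ 2 + ((q : ℝ) ^ 2 + 4 * q + 2) * 2 ^ q) := by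
  have h := (isRenewalSequence_wordCount hq).hasSum_weighted_weighted blockWeight_zero
    blockWeight_nonneg (fun _ => blockWeight_of_notMem) sum_blockWeight_lt_one
  rw [sum_weighted_weighted_blockWeight, sum_weighted_blockWeight, sum_blockWeight,
    sub_sub_cancel] at h
  convert h using 1
  · exact funext fun n => by rw [weighted, weighted, sq, mul_assoc, mul_div_assoc, mul_div_assoc]
  · field_simp
    ring

end WordCountMoments

/-- For `q ≥ 1`, the series `∑_{n≥0} a_{q,n}·(n+q)(n+q−1)·2^{−(n+q)}` converges and equals
`4(2^{2q+1} − (3+q)·2^q + 1)`; this is `F_{ss}(1,0)` for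
`F(s,0) = ∑_{w ∈ χ(0^q)} (s/2)^{ℓ(w)+q}`. -/
theorem wordCount_second_derivative_sum (q : ℕ) (hq : 1 ≤ q) :
    HasSum (fun n : ℕ => (wordCount q n : ℝ) * ((n : ℝ) + q) * ((n : ℝ) + q - 1) / 2 ^ (n + q))
      (4 * (2 ^ (2 * q + 1) - (3 + (q : ℝ)) * 2 ^ q + 1)) := by
  -- The ascription puts the default `AddCommMonoid ℝ` instance back, so that `convert` only has
  -- to compare the summands and the sums.
  have h : HasSum _ (_ : ℝ) := (((hasSum_sq_mul_wordCount_div_two_pow hq).add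
    ((hasSum_mul_wordCount_div_two_pow hq).mul_left (2 * (q : ℝ) - 1))).add
    ((hasSum_wordCount_div_two_pow hq).mul_left ((q : ℝ) ^ 2 - q))).div_const (2 ^ q)
  convert h using 1
  · ext n
    rw [pow_add]
    field_simp
    ring
  · rw [pow_succ, pow_mul']
    field_simp
    ring
end
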